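/- In a summable category, a family (f_i)_{i∈I} in L(X,Y) is summable iff for any partition of I into pairwise disjoint sets (I_j)_{j∈J}: each restricted family (f_i)_{i∈I_j} is summable, and the family (Σ_{i∈I_j} f_i)_{j∈J} is summable; and then Σ_{i∈I} f_i = Σ_{j∈J} Σ_{i∈I_j} f_i. -/

import Mathlib

open CategoryTheory Limits

universe v u

/-- A pre-summability structure on a category enriched over pointed sets
(rendered via zero morphisms): a functor S preserving zero morphisms with
three natural transformations π0, π1, σ to the identity such that π0, π1
are jointly monic. -/
structure PreSummability (L : Type u) [Category.{v} L] [HasZeroMorphisms L] where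
  S : L ⥤ L
  p0 : S ⟶ 𝟭 L
  p1 : S ⟶ 𝟭 L
  sg : S ⟶ 𝟭 L
  S_zero : ∀ (X Y : L), S.map (0 : X ⟶ Y) = 0
  jointly_monic : ∀ {X Y : L} (f g : X ⟶ S.obj Y),
    f ≫ p0.app Y = g ≫ p0.app Y → f ≫ p1.app Y = g ≫ p1.app Y → f = g

variable {L : Type u} [Category.{v} L] [HasZeroMorphisms L]

/-- `w` is the witness of summability of `f0` and `f1`. -/
def PreSummability.IsWitness (P : PreSummability L) {X Y : L}
    (f0 f1 : X ⟶ Y) (w : X ⟶ P.S.obj Y) : Prop :=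
  w ≫ P.p0.app Y = f0 ∧ w ≫ P.p1.app Y = f1

/-- `f0` and `f1` are summable. -/
def PreSummability.Summable (P : PreSummability L) {X Y : L} (f0 f1 : X ⟶ Y) : Prop :=
  ∃ w, P.IsWitness f0 f1 w

/-- `s` is the sum `f0 + f1` of the summable pair `(f0, f1)`. -/
def PreSummability.IsSum (P : PreSummability L) {X Y : L} (f0 f1 s : X ⟶ Y) : Prop :=
  ∃ w, P.IsWitness f0 f1 w ∧ w ≫ P.sg.app Y = s

/-- A summability structure: a pre-summability structure satisfying the axioms
(S-com), (S-zero), (S-wit) and (S-ass). In (S-ass) the flip `c` is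
characterized by the equations π_i ∘ π_j ∘ c = π_j ∘ π_i. -/
structure SummabilityStructure (L : Type u) [Category.{v} L] [HasZeroMorphisms L]
    extends PreSummability L where
  ax_com : ∀ X : L, ∃ w : S.obj X ⟶ S.obj X,
    toPreSummability.IsWitness (p1.app X) (p0.app X) w ∧ w ≫ sg.app X = sg.app X
  ax_zero : ∀ {X Y : L} (f : X ⟶ Y), toPreSummability.IsSum f 0 f
  ax_wit : ∀ {X Y : L} (w0 w1 : X ⟶ S.obj Y),
    toPreSummability.Summable (w0 ≫ sg.app Y) (w1 ≫ sg.app Y) →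
    toPreSummability.Summable w0 w1
  ax_ass : ∀ (X : L) (c : S.obj (S.obj X) ⟶ S.obj (S.obj X)),
    (c ≫ p0.app (S.obj X) ≫ p0.app X = p0.app (S.obj X) ≫ p0.app X) →
    (c ≫ p0.app (S.obj X) ≫ p1.app X = p1.app (S.obj X) ≫ p0.app X) →
    (c ≫ p1.app (S.obj X) ≫ p0.app X = p0.app (S.obj X) ≫ p1.app X) →
    (c ≫ p1.app (S.obj X) ≫ p1.app X = p1.app (S.obj X) ≫ p1.app X) →
    c ≫ S.map (sg.app X) = sg.app (S.obj X)

inductive IsSumList (P : PreSummability L) : ∀ {X Y : L}, List (X ⟶ Y) → (X ⟶ Y) → Prop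
  | nil {X Y : L} : IsSumList P ([] : List (X ⟶ Y)) 0
  | snoc {X Y : L} (l : List (X ⟶ Y)) (s f t : X ⟶ Y) :
      IsSumList P l s → P.IsSum s f t → IsSumList P (l ++ [f]) t

/-!
A summability structure only provides binary sums, so a finite family is summed as a list,
by repeated binary sums. Witnesses are unique by joint monicity, so binary sums and list sums
are unique. Commutativity comes from (S-com), and the mixed associativity
`(f + g) + h = (f + h) + g` from (S-wit): lifting the witnesses of `f + g` and `h + 0` to a
witness of witnesses and reading it through `S π₀`, `S π₁` and `S σ`. These make list sums
additive under concatenation and invariant under permutation, which is the partition rule.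
-/

namespace PreSummability

variable (P : PreSummability L) {X Y Z : L}

lemma map_p0 (k : Y ⟶ Z) : P.S.map k ≫ P.p0.app Z = P.p0.app Y ≫ k := P.p0.naturality k

lemma map_p1 (k : Y ⟶ Z) : P.S.map k ≫ P.p1.app Z = P.p1.app Y ≫ k := P.p1.naturality k

lemma map_sg (k : Y ⟶ Z) : P.S.map k ≫ P.sg.app Z = P.sg.app Y ≫ k := P.sg.naturality k

variable {P}

lemma IsWitness.unique {f0 f1 : X ⟶ Y} {w w' : X ⟶ P.S.obj Y} (h : P.IsWitness f0 f1 w)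
    (h' : P.IsWitness f0 f1 w') : w = w' :=
  P.jointly_monic w w' (h.1.trans h'.1.symm) (h.2.trans h'.2.symm)

lemma IsWitness.map {f0 f1 : X ⟶ Y} {w : X ⟶ P.S.obj Y} (h : P.IsWitness f0 f1 w)
    (k : Y ⟶ Z) : P.IsWitness (f0 ≫ k) (f1 ≫ k) (w ≫ P.S.map k) :=
  ⟨by rw [Category.assoc, map_p0, ← Category.assoc, h.1],
    by rw [Category.assoc, map_p1, ← Category.assoc, h.2]⟩

lemma IsSum.unique {f0 f1 s s' : X ⟶ Y} (h : P.IsSum f0 f1 s) (h' : P.IsSum f0 f1 s') :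
    s = s' := by
  obtain ⟨w, hw, rfl⟩ := h
  obtain ⟨w', hw', rfl⟩ := h'
  rw [hw.unique hw']

end PreSummability

namespace IsSumList

variable {P : PreSummability L} {X Y : L}

lemma nil_iff {t : X ⟶ Y} : IsSumList P [] t ↔ t = 0 := by
  refine ⟨fun h => ?_, fun ht => ht ▸ nil⟩
  generalize hm : ([] : List (X ⟶ Y)) = m at h
  cases h with
  | nil => rfl
  | snoc => simp at hm

lemma append_singleton_iff {l : List (X ⟶ Y)} {f t : X ⟶ Y} :
    IsSumList P (l ++ [f]) t ↔ ∃ s, IsSumList P l s ∧ P.IsSum s f t := by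
  refine ⟨fun h => ?_, fun ⟨s, hl, hs⟩ => snoc l s f t hl hs⟩
  generalize hm : l ++ [f] = m at h
  cases h with
  | nil => simp at hm
  | snoc l' s f' t hl' hs =>
    obtain ⟨rfl, hf⟩ := List.append_inj' hm rfl
    obtain rfl : f = f' := by simpa using hf
    exact ⟨s, hl', hs⟩

lemma unique {l : List (X ⟶ Y)} {s s' : X ⟶ Y} (h : IsSumList P l s)
    (h' : IsSumList P l s') : s = s' := by
  induction h generalizing s' with
  | nil => exact (nil_iff.1 h').symm
  | snoc l s f t _ hs ih =>
    obtain ⟨s₁, hl₁, hs₁⟩ := append_singleton_iff.1 h'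
    obtain rfl := ih hl₁
    exact hs.unique hs₁

end IsSumList

namespace SummabilityStructure

variable (Q : SummabilityStructure L) {X Y : L}

lemma isSum_comm {f g s : X ⟶ Y} (h : Q.IsSum f g s) : Q.IsSum g f s := by
  obtain ⟨w, ⟨hw0, hw1⟩, rfl⟩ := h
  obtain ⟨c, ⟨hc0, hc1⟩, hcs⟩ := Q.ax_com Y
  refine ⟨w ≫ c, ⟨?_, ?_⟩, ?_⟩ <;> rw [Category.assoc]
  exacts [hc0 ▸ hw1, hc1 ▸ hw0, by rw [hcs]]

lemma isSum_zero_left (f : X ⟶ Y) : Q.IsSum 0 f f :=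
  Q.isSum_comm (Q.ax_zero f)

lemma exists_isSum_right_comm {f g h s t : X ⟶ Y} (hs : Q.IsSum f g s) (ht : Q.IsSum s h t) :
    ∃ u, Q.IsSum f h u ∧ Q.IsSum u g t := by
  obtain ⟨w, hw, rfl⟩ := hs
  obtain ⟨v, hv, rfl⟩ := ht
  obtain ⟨z, hz, hzs⟩ := Q.ax_zero h
  -- `ax_wit` lifts the pair of witnesses `(w, z)` to a witness of witnesses `u`.
  obtain ⟨u, hu⟩ := Q.ax_wit w z ⟨v, by rw [hzs]; exact hv⟩
  have huv : u ≫ Q.S.map (Q.sg.app Y) = v := (hu.map _).unique (hzs ▸ hv)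
  have hfh : Q.IsWitness f h (u ≫ Q.S.map (Q.p0.app Y)) := hw.1 ▸ hz.1 ▸ hu.map _
  have hg0 : Q.IsWitness g 0 (u ≫ Q.S.map (Q.p1.app Y)) := hw.2 ▸ hz.2 ▸ hu.map _
  have hg : (u ≫ Q.S.map (Q.p1.app Y)) ≫ Q.sg.app Y = g := by
    obtain ⟨z', hz', hz's⟩ := Q.ax_zero g
    rw [hg0.unique hz', hz's]
  have hσ (k : Q.S.obj Y ⟶ Y) :
      (u ≫ Q.sg.app (Q.S.obj Y)) ≫ k = (u ≫ Q.S.map k) ≫ Q.sg.app Y := by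
    simp only [Category.assoc]
    exact congrArg (u ≫ ·) (Q.map_sg k).symm
  refine ⟨_, ⟨_, hfh, rfl⟩,
    u ≫ Q.sg.app (Q.S.obj Y), ⟨hσ _, (hσ _).trans hg⟩, (hσ _).trans (by rw [huv])⟩

lemma exists_isSum_assoc {f g h s t : X ⟶ Y} (hs : Q.IsSum f g s) (ht : Q.IsSum s h t) :
    ∃ u, Q.IsSum g h u ∧ Q.IsSum f u t := by
  obtain ⟨u, hu, hut⟩ := Q.exists_isSum_right_comm (Q.isSum_comm hs) ht
  exact ⟨u, hu, Q.isSum_comm hut⟩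

lemma isSumList_append_iff {l₁ l₂ : List (X ⟶ Y)} {t : X ⟶ Y} :
    IsSumList Q.toPreSummability (l₁ ++ l₂) t ↔ ∃ s₁ s₂, IsSumList Q.toPreSummability l₁ s₁ ∧
      IsSumList Q.toPreSummability l₂ s₂ ∧ Q.IsSum s₁ s₂ t := by
  induction l₂ using List.reverseRecOn generalizing t with
  | nil =>
    refine ⟨fun h => ⟨t, 0, by simpa using h, .nil, Q.ax_zero t⟩, ?_⟩
    rintro ⟨s₁, s₂, h₁, h₂, hs⟩
    obtain rfl := IsSumList.nil_iff.1 h₂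
    rw [List.append_nil, hs.unique (Q.ax_zero s₁)]
    exact h₁
  | append_singleton l₂ f ih =>
    rw [← List.append_assoc, IsSumList.append_singleton_iff]
    constructor
    · rintro ⟨s, hs, hst⟩
      obtain ⟨s₁, s₂, h₁, h₂, hs₁₂⟩ := ih.1 hs
      obtain ⟨u, hu, hut⟩ := Q.exists_isSum_assoc hs₁₂ hst
      exact ⟨s₁, u, h₁, .snoc _ _ _ _ h₂ hu, hut⟩
    · rintro ⟨s₁, s₂, h₁, h₂, hst⟩
      obtain ⟨s₂', h₂', hs₂⟩ := IsSumList.append_singleton_iff.1 h₂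
      obtain ⟨u, hu, hut⟩ := Q.exists_isSum_right_comm hs₂ (Q.isSum_comm hst)
      exact ⟨u, ih.2 ⟨s₁, s₂', h₁, h₂', Q.isSum_comm hu⟩, hut⟩

lemma isSumList_singleton_iff {f s : X ⟶ Y} : IsSumList Q.toPreSummability [f] s ↔ s = f := by
  rw [← List.nil_append [f], IsSumList.append_singleton_iff]
  refine ⟨fun ⟨s₀, h₀, hs⟩ => ?_, fun hs => ⟨0, .nil, hs ▸ Q.isSum_zero_left f⟩⟩
  rw [IsSumList.nil_iff.1 h₀] at hs
  exact hs.unique (Q.isSum_zero_left f)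

lemma isSumList_cons_iff {f t : X ⟶ Y} {l : List (X ⟶ Y)} :
    IsSumList Q.toPreSummability (f :: l) t ↔
      ∃ s, IsSumList Q.toPreSummability l s ∧ Q.IsSum f s t := by
  rw [← List.singleton_append, isSumList_append_iff]
  simp only [isSumList_singleton_iff, exists_and_left, exists_eq_left]

lemma isSumList_perm_iff {l l' : List (X ⟶ Y)} (hp : l.Perm l') {s : X ⟶ Y} :
    IsSumList Q.toPreSummability l s ↔ IsSumList Q.toPreSummability l' s := by
  induction hp generalizing s with
  | nil => rfl
  | cons x _ ih => simp only [isSumList_cons_iff, ih]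
  | swap x y l =>
    suffices ∀ x y : X ⟶ Y, IsSumList Q.toPreSummability (y :: x :: l) s →
        IsSumList Q.toPreSummability (x :: y :: l) s from ⟨this x y, this y x⟩
    intro x y h
    obtain ⟨a, hxl, hya⟩ := Q.isSumList_cons_iff.1 h
    obtain ⟨b, hl, hxb⟩ := Q.isSumList_cons_iff.1 hxl
    obtain ⟨q, hxy, hqb⟩ := Q.exists_isSum_right_comm hxb (Q.isSum_comm hya)
    obtain ⟨v, hyb, hxv⟩ := Q.exists_isSum_assoc hxy hqb
    exact Q.isSumList_cons_iff.2 ⟨v, Q.isSumList_cons_iff.2 ⟨b, hl, hyb⟩, hxv⟩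
  | trans _ _ ih₁ ih₂ => exact ih₁.trans ih₂

lemma isSumList_flatten_iff {blocks : List (List (X ⟶ Y))} {t : X ⟶ Y} :
    IsSumList Q.toPreSummability blocks.flatten t ↔ ∃ sums,
      List.Forall₂ (IsSumList Q.toPreSummability) blocks sums ∧
        IsSumList Q.toPreSummability sums t := by
  induction blocks generalizing t with
  | nil =>
    simp only [List.flatten_nil, IsSumList.nil_iff, List.forall₂_nil_left_iff, exists_eq_left]
  | cons b bs ih =>
    simp only [List.flatten_cons, isSumList_append_iff, ih, List.forall₂_cons_left_iff]
    constructor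
    · rintro ⟨s₁, s₂, h₁, ⟨sums, hf, h₂⟩, hs⟩
      exact ⟨s₁ :: sums, ⟨s₁, sums, h₁, hf, rfl⟩, Q.isSumList_cons_iff.2 ⟨s₂, h₂, hs⟩⟩
    · rintro ⟨_, ⟨s₁, sums, h₁, hf, rfl⟩, h⟩
      obtain ⟨s₂, h₂, hs⟩ := Q.isSumList_cons_iff.1 h
      exact ⟨s₁, s₂, h₁, ⟨sums, hf, h₂⟩, hs⟩

end SummabilityStructure

/-- In a summable category, a family is summable iff, for any partition of it
into blocks, each block is summable and the family of block sums is summable;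
and then the total sums agree. Partitions of a finite family are rendered as a
list of blocks whose concatenation is a permutation of the family. -/
theorem stmt7 (Q : SummabilityStructure L) {X Y : L}
    (l : List (X ⟶ Y)) (blocks : List (List (X ⟶ Y))) (hp : l.Perm blocks.flatten) :
    ((∃ s, IsSumList Q.toPreSummability l s) ↔
      (∃ (sums : List (X ⟶ Y)) (t : X ⟶ Y),
        List.Forall₂ (IsSumList Q.toPreSummability) blocks sums ∧
        IsSumList Q.toPreSummability sums t)) ∧
    (∀ (s : X ⟶ Y) (sums : List (X ⟶ Y)) (t : X ⟶ Y),
      IsSumList Q.toPreSummability l s →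
      List.Forall₂ (IsSumList Q.toPreSummability) blocks sums →
      IsSumList Q.toPreSummability sums t → s = t) := by
  have hl (t : X ⟶ Y) : IsSumList Q.toPreSummability l t ↔ ∃ sums,
      List.Forall₂ (IsSumList Q.toPreSummability) blocks sums ∧
        IsSumList Q.toPreSummability sums t :=
    (Q.isSumList_perm_iff hp).trans Q.isSumList_flatten_iff
  refine ⟨?_, fun s sums t hs hf ht => hs.unique ((hl t).2 ⟨sums, hf, ht⟩)⟩
  simp only [hl]
  exact exists_comm
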